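/- Let a ∈ GL(2,ℂ) with |det a| = 1, κ = diag(a, (a†)⁻¹), λ > 0, and let Λ ∈ GL(4,ℝ) be the Lorentz transformation determined by M(Λv) = a M(v) a† for all v ∈ ℝ⁴. Let B_0,…,B_3 and C_0,…,C_3 ∈ M₄(ℂ), and define A_μ = λ⁻¹ (Λ⁻¹)^ν{}_μ κ B_ν κ⁻¹ + C_μ (sum over ν). Then Σ^μ A_μ = λ⁻¹ κ (Σ^ν B_ν) κ⁻¹ + Σ^μ C_μ; in particular, a potential field A transforming with the Jacobian factor (λΛ)⁻¹ and conjugation by κ induces, via Φ = Σ^μ A_μ, an interaction field transforming with the factor λ⁻¹ and conjugation by κ. -/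

import Mathlib

open Matrix Complex

noncomputable section

abbrev M2 : Type := Matrix (Fin 2) (Fin 2) ℂ
abbrev M4 : Type := Matrix (Fin 2 ⊕ Fin 2) (Fin 2 ⊕ Fin 2) ℂ

/-- The Pauli matrices `σ₀ = I₂, σ₁, σ₂, σ₃`. -/
def pauli : Fin 4 → M2
  | 0 => 1
  | 1 => !![0, 1; 1, 0]
  | 2 => !![0, -Complex.I; Complex.I, 0]
  | 3 => !![1, 0; 0, -1]

/-- `M(x) = i (x⁰σ₀ + x¹σ₁ + x²σ₂ + x³σ₃)`. -/
def Mmap (x : Fin 4 → ℝ) : M2 := Complex.I • ∑ μ : Fin 4, (x μ : ℂ) • pauli μ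

/-- The chiral Dirac gamma matrices: `γ⁰ = [[0,−I₂],[−I₂,0]]`, `γʲ = [[0,σⱼ],[−σⱼ,0]]`. -/
def gammaM : Fin 4 → M4
  | 0 => fromBlocks 0 (-1) (-1) 0
  | 1 => fromBlocks 0 (pauli 1) (-(pauli 1)) 0
  | 2 => fromBlocks 0 (pauli 2) (-(pauli 2)) 0
  | 3 => fromBlocks 0 (pauli 3) (-(pauli 3)) 0

/-- `Σ^μ = iγ^μ` (the raised-index intertwining matrices). -/
def SigmaUp (μ : Fin 4) : M4 := Complex.I • gammaM μ

/-- `κ(a) = diag(a, (a†)⁻¹)`. -/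
def kappaM (a : M2) : M4 := fromBlocks a 0 0 (aᴴ)⁻¹

/-!
Since `det M(x) = -⟨x, x⟩_η` and `|det a| = 1`, the relation `M(Λv) = a M(v) a†` makes `Λ` a
Lorentz transformation, so `(Λ⁻¹)ᵀ = η Λ η`. On `2 × 2` matrices `π` is the adjugate, hence
`π(a M a†) = (a†)⁻¹ π(M) a⁻¹` and `κ Σ(M) κ⁻¹ = Σ(a M a†)`. Together these give
`(Λ⁻¹)^ν_μ Σ^μ = κ Σ^ν κ⁻¹`, and the theorem follows by linearity, conjugation by `κ` being
multiplicative.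
-/

def minkowskiMetric : Matrix (Fin 4) (Fin 4) ℝ := diagonal ![1, -1, -1, -1]

local notation "η" => minkowskiMetric

lemma minkowskiMetric_transpose : ηᵀ = η := diagonal_transpose _

lemma minkowskiMetric_mul_self : η * η = 1 := by
  rw [minkowskiMetric, diagonal_mul_diagonal, ← diagonal_one]
  congr 1; ext i; fin_cases i <;> norm_num

lemma Mmap_eq_of (x : Fin 4 → ℝ) :
    Mmap x = !![I * (x 0 + x 3), x 2 + I * x 1; -x 2 + I * x 1, I * (x 0 - x 3)] := by
  ext i j
  fin_cases i <;> fin_cases j <;> simp [Mmap, pauli, Fin.sum_univ_four] <;> ring_nf <;> simp; ring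

lemma Mmap_add (x y : Fin 4 → ℝ) : Mmap (x + y) = Mmap x + Mmap y := by
  simp [Mmap, add_smul, Finset.sum_add_distrib, smul_add]

lemma Mmap_smul (r : ℝ) (x : Fin 4 → ℝ) : Mmap (r • x) = (r : ℂ) • Mmap x := by
  simp only [Mmap, Pi.smul_apply, smul_eq_mul, ofReal_mul, mul_smul, ← Finset.smul_sum]
  exact smul_comm _ _ _

lemma det_Mmap (x : Fin 4 → ℝ) : (Mmap x).det = -((x ⬝ᵥ η *ᵥ x : ℝ) : ℂ) := by
  rw [Mmap_eq_of, det_fin_two_of]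
  simp [minkowskiMetric, dotProduct, Fin.sum_univ_four, mulVec_diagonal]
  ring_nf; simp; ring

lemma adjugate_Mmap (x : Fin 4 → ℝ) : (Mmap x).adjugate = Mmap (η *ᵥ x) := by
  rw [Mmap_eq_of, Mmap_eq_of, adjugate_fin_two_of]
  ext i j
  fin_cases i <;> fin_cases j <;> simp [minkowskiMetric, mulVec_diagonal] <;> ring

/-- The paper's `Σ(M)`, with `π` taken to be the adjugate, which agrees with it on
skew-Hermitian matrices. -/
def sigmaOf (X : M2) : M4 := fromBlocks 0 (-X) (-X.adjugate) 0

lemma sigmaOf_Mmap (x : Fin 4 → ℝ) :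
    sigmaOf (Mmap x) = fromBlocks 0 (-Mmap x) (-Mmap (η *ᵥ x)) 0 := by
  rw [sigmaOf, adjugate_Mmap]

def sigmaOfMmapₗ : (Fin 4 → ℝ) →ₗ[ℝ] M4 where
  toFun x := sigmaOf (Mmap x)
  map_add' x y := by
    simp only [sigmaOf_Mmap]
    simp only [mulVec_add, Mmap_add, neg_add, fromBlocks_add, add_zero]
  map_smul' r x := by
    simp only [sigmaOf_Mmap]
    simp only [mulVec_smul, Mmap_smul, fromBlocks_smul, smul_neg, smul_zero, Complex.coe_smul,
      RingHom.id_apply]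

lemma SigmaUp_eq (μ : Fin 4) : SigmaUp μ = sigmaOf (Mmap (η *ᵥ Pi.single μ 1)) := by
  rw [sigmaOf_Mmap, mulVec_mulVec, minkowskiMetric_mul_self, one_mulVec]
  fin_cases μ <;> ext (i | i) (j | j) <;> fin_cases i <;> fin_cases j <;>
    simp [SigmaUp, gammaM, Mmap_eq_of, minkowskiMetric, pauli]

lemma sum_smul_SigmaUp (c : Fin 4 → ℝ) :
    ∑ μ, (c μ : ℂ) • SigmaUp μ = sigmaOf (Mmap (η *ᵥ c)) := by
  have hc : η *ᵥ c = ∑ μ, c μ • η *ᵥ Pi.single μ 1 := by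
    conv_lhs => rw [← Finset.univ_sum_single c]
    simp only [mulVec_sum, ← mulVec_smul, ← Pi.single_smul', smul_eq_mul, mul_one]
  change _ = sigmaOfMmapₗ (η *ᵥ c)
  simp only [hc, map_sum, map_smul, SigmaUp_eq, Complex.coe_smul]
  rfl

section Polarization

variable {n K : Type*} [Fintype n] [DecidableEq n] [Field K] [NeZero (2 : K)]

lemma Matrix.eq_zero_of_forall_dotProduct_mulVec_self {D : Matrix n n K} (hD : Dᵀ = D)
    (h : ∀ x, x ⬝ᵥ D *ᵥ x = 0) : D = 0 := by
  have hdiag (k : n) : D k k = 0 := by simpa using h (Pi.single k 1)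
  ext i j
  have hij := h (Pi.single i 1 + Pi.single j 1)
  simp only [mulVec_add, dotProduct_add, add_dotProduct, mulVec_single_one,
    single_one_dotProduct, col_apply, hdiag, zero_add, add_zero] at hij
  rw [show D j i = D i j from congrFun (congrFun hD i) j, ← two_mul] at hij
  exact (mul_eq_zero.mp hij).resolve_left two_ne_zero

lemma Matrix.transpose_mul_mul_self_eq_of_forall_dotProduct {S Λ : Matrix n n K} (hS : Sᵀ = S)
    (h : ∀ x, Λ *ᵥ x ⬝ᵥ S *ᵥ (Λ *ᵥ x) = x ⬝ᵥ S *ᵥ x) : Λᵀ * S * Λ = S := by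
  rw [← sub_eq_zero]
  refine eq_zero_of_forall_dotProduct_mulVec_self ?_ fun x => ?_
  · simp [transpose_mul, hS, Matrix.mul_assoc]
  · rw [sub_mulVec, dotProduct_sub, sub_eq_zero, ← h x, ← mulVec_mulVec, ← mulVec_mulVec,
      dotProduct_mulVec, ← mulVec_transpose, transpose_transpose]

end Polarization

lemma Matrix.adjugate_eq_det_smul_inv {n R : Type*} [Fintype n] [DecidableEq n] [CommRing R]
    {A : Matrix n n R} (hA : IsUnit A.det) : A.adjugate = A.det • A⁻¹ := by
  rw [Matrix.inv_def, smul_smul, Ring.mul_inverse_cancel _ hA, one_smul]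

section UnimodularConjugation

variable {n : Type*} [Fintype n] [DecidableEq n] {a : Matrix n n ℂ}

lemma isUnit_det_of_norm_det_eq_one (ha : ‖a.det‖ = 1) : IsUnit a.det :=
  isUnit_iff_ne_zero.mpr (norm_ne_zero_iff.mp (ha ▸ one_ne_zero))

lemma det_mul_star_det_of_norm_det_eq_one (ha : ‖a.det‖ = 1) : a.det * star a.det = 1 := by
  rw [Complex.star_def, Complex.mul_conj', ha]
  norm_num

lemma det_mul_mul_conjTranspose (ha : ‖a.det‖ = 1) (X : Matrix n n ℂ) :
    (a * X * aᴴ).det = X.det := by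
  rw [det_mul, det_mul, det_conjTranspose, mul_right_comm, mul_comm,
    det_mul_star_det_of_norm_det_eq_one ha, mul_one]

lemma adjugate_mul_mul_conjTranspose (ha : ‖a.det‖ = 1) (X : Matrix n n ℂ) :
    (a * X * aᴴ).adjugate = aᴴ⁻¹ * X.adjugate * a⁻¹ := by
  have hdet := isUnit_det_of_norm_det_eq_one ha
  rw [adjugate_mul_distrib, adjugate_mul_distrib, adjugate_eq_det_smul_inv hdet,
    adjugate_eq_det_smul_inv (by rwa [det_conjTranspose, isUnit_star]), det_conjTranspose]
  simp only [smul_mul_assoc, mul_smul_comm, smul_smul, Matrix.mul_assoc]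
  rw [det_mul_star_det_of_norm_det_eq_one ha, one_smul]

end UnimodularConjugation

lemma inv_kappaM {a : M2} (ha : IsUnit a.det) : (kappaM a)⁻¹ = fromBlocks a⁻¹ 0 0 aᴴ := by
  have hunit : IsUnit a := (isUnit_iff_isUnit_det a).mpr ha
  rw [kappaM, inv_fromBlocks_zero₂₁_of_isUnit_iff, nonsing_inv_nonsing_inv]
  · simp
  · rwa [det_conjTranspose, isUnit_star]
  · simp [isUnit_nonsing_inv_iff, hunit]

lemma isUnit_det_kappaM {a : M2} (ha : IsUnit a.det) : IsUnit (kappaM a).det := by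
  have hunit : IsUnit a := (isUnit_iff_isUnit_det a).mpr ha
  rw [← isUnit_iff_isUnit_det, kappaM, isUnit_fromBlocks_zero₂₁, isUnit_nonsing_inv_iff,
    isUnit_conjTranspose]
  exact ⟨hunit, hunit⟩

lemma kappaM_mul_sigmaOf_mul_inv {a : M2} (ha : ‖a.det‖ = 1) (X : M2) :
    kappaM a * sigmaOf X * (kappaM a)⁻¹ = sigmaOf (a * X * aᴴ) := by
  rw [inv_kappaM (isUnit_det_of_norm_det_eq_one ha), kappaM, sigmaOf, sigmaOf,
    fromBlocks_multiply, fromBlocks_multiply, adjugate_mul_mul_conjTranspose ha]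
  simp [Matrix.mul_assoc]

section Lorentz

variable {a : M2} {Λ : Matrix (Fin 4) (Fin 4) ℝ}

lemma transpose_mul_minkowskiMetric_mul (ha : ‖a.det‖ = 1)
    (hΛa : ∀ v, Mmap (Λ *ᵥ v) = a * Mmap v * aᴴ) : Λᵀ * η * Λ = η := by
  refine transpose_mul_mul_self_eq_of_forall_dotProduct minkowskiMetric_transpose fun x => ?_
  have h := congrArg det (hΛa x)
  rwa [det_mul_mul_conjTranspose ha, det_Mmap, det_Mmap, neg_inj, ofReal_inj] at h

lemma minkowskiMetric_mul_transpose_inv (hΛ : Λᵀ * η * Λ = η) : η * Λ⁻¹ᵀ = Λ * η := by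
  have hinv : Λ⁻¹ = η * Λᵀ * η := by
    refine inv_eq_left_inv ?_
    simp only [Matrix.mul_assoc] at hΛ ⊢
    rw [hΛ, minkowskiMetric_mul_self]
  rw [hinv, transpose_mul, transpose_mul, transpose_transpose, minkowskiMetric_transpose,
    ← Matrix.mul_assoc, ← Matrix.mul_assoc, minkowskiMetric_mul_self, Matrix.one_mul]

lemma sum_inv_smul_SigmaUp (ha : ‖a.det‖ = 1) (hΛa : ∀ v, Mmap (Λ *ᵥ v) = a * Mmap v * aᴴ)
    (ν : Fin 4) :
    ∑ μ, ((Λ⁻¹ ν μ : ℝ) : ℂ) • SigmaUp μ = kappaM a * SigmaUp ν * (kappaM a)⁻¹ := by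
  have hrow : η *ᵥ Λ⁻¹ ν = Λ *ᵥ (η *ᵥ Pi.single ν 1) := by
    rw [show Λ⁻¹ ν = Pi.single ν 1 ᵥ* Λ⁻¹ from (single_one_vecMul ν _).symm,
      ← mulVec_transpose, mulVec_mulVec, mulVec_mulVec, minkowskiMetric_mul_transpose_inv (transpose_mul_minkowskiMetric_mul ha hΛa)]
  rw [sum_smul_SigmaUp, hrow, hΛa, ← kappaM_mul_sigmaOf_mul_inv ha, SigmaUp_eq]

end Lorentz

theorem stmt18_general (a : M2) (hadet : ‖a.det‖ = 1)
    (lam : ℝ)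
    (Λ : Matrix (Fin 4) (Fin 4) ℝ)
    (hΛa : ∀ v : Fin 4 → ℝ, Mmap (Λ.mulVec v) = a * Mmap v * aᴴ)
    (B C A : Fin 4 → M4)
    (hA : ∀ μ : Fin 4, A μ =
      lam⁻¹ • ∑ ν : Fin 4, ((Λ⁻¹ ν μ : ℝ) : ℂ) • (kappaM a * B ν * (kappaM a)⁻¹) + C μ) :
    ∑ μ : Fin 4, SigmaUp μ * A μ =
      lam⁻¹ • (kappaM a * (∑ ν : Fin 4, SigmaUp ν * B ν) * (kappaM a)⁻¹) +
      ∑ μ : Fin 4, SigmaUp μ * C μ := by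
  have hconj (X Y : M4) : kappaM a * X * (kappaM a)⁻¹ * (kappaM a * Y * (kappaM a)⁻¹) =
      kappaM a * (X * Y) * (kappaM a)⁻¹ := by
    simp only [Matrix.mul_assoc, nonsing_inv_mul_cancel_left (kappaM a) _
      (isUnit_det_kappaM (isUnit_det_of_norm_det_eq_one hadet))]
  calc ∑ μ, SigmaUp μ * A μ
      = lam⁻¹ • ∑ ν, (∑ μ, ((Λ⁻¹ ν μ : ℝ) : ℂ) • SigmaUp μ) * (kappaM a * B ν * (kappaM a)⁻¹) +
          ∑ μ, SigmaUp μ * C μ := by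
        simp only [hA, mul_add, Finset.sum_add_distrib, Finset.mul_sum, Finset.sum_mul,
          mul_smul_comm, smul_mul_assoc, Finset.smul_sum]
        rw [Finset.sum_comm]
    _ = lam⁻¹ • (kappaM a * (∑ ν, SigmaUp ν * B ν) * (kappaM a)⁻¹) + ∑ μ, SigmaUp μ * C μ := by
        simp only [sum_inv_smul_SigmaUp hadet hΛa, hconj, Finset.mul_sum, Finset.sum_mul]

/-- if `A_μ = λ⁻¹ (Λ⁻¹)^ν{}_μ κ B_ν κ⁻¹ + C_μ` where `Λ ∈ GL(4,ℝ)` is the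
Lorentz transformation determined by `M(Λv) = a M(v) a†`, then
`Σ^μ A_μ = λ⁻¹ κ (Σ^ν B_ν) κ⁻¹ + Σ^μ C_μ`. -/
theorem stmt18 (a : M2) (ha : IsUnit a) (hadet : ‖a.det‖ = 1)
    (lam : ℝ) (hlam : 0 < lam)
    (Λ : Matrix (Fin 4) (Fin 4) ℝ) (hΛ : IsUnit Λ)
    (hΛa : ∀ v : Fin 4 → ℝ, Mmap (Λ.mulVec v) = a * Mmap v * aᴴ)
    (B C A : Fin 4 → M4)
    (hA : ∀ μ : Fin 4, A μ =
      lam⁻¹ • ∑ ν : Fin 4, ((Λ⁻¹ ν μ : ℝ) : ℂ) • (kappaM a * B ν * (kappaM a)⁻¹) + C μ) :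
    ∑ μ : Fin 4, SigmaUp μ * A μ =
      lam⁻¹ • (kappaM a * (∑ ν : Fin 4, SigmaUp ν * B ν) * (kappaM a)⁻¹) +
      ∑ μ : Fin 4, SigmaUp μ * C μ :=
  stmt18_general a hadet lam Λ hΛa B C A hA
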